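/- In the ring M_n, if B is a subset of [n] not containing the element 1, then h(B) · h(B ∪ {1}) = 0. -/
import Mathlib


open MvPolynomial

/-- The defining relations of the ring `M_n`: diagonal generators vanish, `x_{a,b}² = 0`,
`x_{a,b}·x_{a,c} = 0` for distinct `a,b,c`, and the Ptolemy relations
`x_{a,b}x_{c,d} + x_{a,c}x_{b,d} + x_{a,d}x_{b,c} = 0` for distinct `a,b,c,d`. -/
def relSet (n : ℕ) : Set (MvPolynomial (Sym2 (Fin n)) ℚ) :=
  {p | (∃ a : Fin n, p = X s(a, a)) ∨
       (∃ a b : Fin n, a ≠ b ∧ p = X s(a, b) * X s(a, b)) ∨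
       (∃ a b c : Fin n, a ≠ b ∧ a ≠ c ∧ b ≠ c ∧ p = X s(a, b) * X s(a, c)) ∨
       (∃ a b c d : Fin n, a ≠ b ∧ a ≠ c ∧ a ≠ d ∧ b ≠ c ∧ b ≠ d ∧ c ≠ d ∧
         p = X s(a, b) * X s(c, d) + X s(a, c) * X s(b, d) + X s(a, d) * X s(b, c))}

/-- The ring `M_n`, presented by generators `x_{a,b}` for two-element subsets `{a,b}` of `[n]`
subject to the relations in `relSet`. -/
abbrev Mring (n : ℕ) := MvPolynomial (Sym2 (Fin n)) ℚ ⧸ Ideal.span (relSet n)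

/-- The generator `x_{a,b}` of `M_n`. -/
noncomputable def xg {n : ℕ} (a b : Fin n) : Mring n :=
  Ideal.Quotient.mk _ (X s(a, b))

/-- `h(A) = Σ_{{a,b} ⊆ A} x_{a,b}`, the sum over two-element subsets of `A`. -/
noncomputable def hA {n : ℕ} (A : Finset (Fin n)) : Mring n :=
  ∑ a ∈ A, ∑ b ∈ A.filter (fun b => a < b), xg a b

/- We model `[n]` via `Fin n`, with the element `1 ∈ [n]` corresponding to `0 : Fin n`. -/

variable {n : ℕ}

lemma xg_comm (a b : Fin n) : xg a b = xg b a := by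
  unfold xg; rw [Sym2.eq_swap]

lemma xg_self (a : Fin n) : xg a a = 0 := by
  rw [xg, Ideal.Quotient.eq_zero_iff_mem]
  exact Ideal.subset_span (Or.inl ⟨a, rfl⟩)

lemma xg_sq (a b : Fin n) : xg a b * xg a b = 0 := by
  rcases eq_or_ne a b with rfl | h
  · rw [xg_self]; ring
  · have : (Ideal.Quotient.mk _ (X s(a,b) * X s(a,b)) : Mring n) = 0 :=
      Ideal.Quotient.eq_zero_iff_mem.mpr (Ideal.subset_span (Or.inr (Or.inl ⟨a, b, h, rfl⟩)))
    simpa [xg, map_mul] using this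

lemma adj_ll (a b c : Fin n) : xg a b * xg a c = 0 := by
  rcases eq_or_ne b c with rfl | hbc
  · exact xg_sq a b
  rcases eq_or_ne a b with rfl | hab
  · rw [xg_self]; ring
  rcases eq_or_ne a c with rfl | hac
  · rw [xg_self]; ring
  · have : (Ideal.Quotient.mk _ (X s(a,b) * X s(a,c)) : Mring n) = 0 :=
      Ideal.Quotient.eq_zero_iff_mem.mpr
        (Ideal.subset_span (Or.inr (Or.inr (Or.inl ⟨a, b, c, hab, hac, hbc, rfl⟩))))
    simpa [xg, map_mul] using this

lemma adj_lr (a b c : Fin n) : xg a b * xg c a = 0 := by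
  rw [xg_comm c a]; exact adj_ll a b c

lemma adj_rl (a b c : Fin n) : xg b a * xg a c = 0 := by
  rw [xg_comm b a]; exact adj_ll a b c

lemma adj_rr (a b c : Fin n) : xg b a * xg c a = 0 := by
  rw [xg_comm b a, xg_comm c a]; exact adj_ll a b c

lemma ptolemy (a b c d : Fin n) :
    xg a b * xg c d + xg a c * xg b d + xg a d * xg b c = 0 := by
  rcases eq_or_ne a b with rfl | hab
  · simp [xg_self, adj_ll]
  rcases eq_or_ne a c with rfl | hac
  · simp [xg_self, adj_ll, adj_lr]
  rcases eq_or_ne a d with rfl | had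
  · simp [xg_self, adj_ll, adj_lr]
  rcases eq_or_ne b c with rfl | hbc
  · simp [xg_self, adj_rl]
  rcases eq_or_ne b d with rfl | hbd
  · simp [xg_self, adj_rl, adj_rr]
  rcases eq_or_ne c d with rfl | hcd
  · simp [xg_self, adj_rr]
  · have : (Ideal.Quotient.mk _
        (X s(a,b) * X s(c,d) + X s(a,c) * X s(b,d) + X s(a,d) * X s(b,c)) : Mring n) = 0 :=
      Ideal.Quotient.eq_zero_iff_mem.mpr
        (Ideal.subset_span (Or.inr (Or.inr (Or.inr
          ⟨a, b, c, d, hab, hac, had, hbc, hbd, hcd, rfl⟩))))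
    simpa [xg, map_mul, map_add] using this

/-- The full symmetrized double sum. -/
noncomputable def Sfull (A : Finset (Fin n)) : Mring n := ∑ a ∈ A, ∑ b ∈ A, xg a b

lemma xg_split (a b : Fin n) :
    xg a b = (if a < b then xg a b else 0) + (if b < a then xg a b else 0) := by
  rcases lt_trichotomy a b with h | rfl | h
  · simp [h, h.asymm]
  · simp [lt_irrefl, xg_self]
  · simp [h, h.asymm]

lemma Sfull_eq (A : Finset (Fin n)) : Sfull A = hA A + hA A := by
  have h1 : hA A = ∑ a ∈ A, ∑ b ∈ A, if a < b then xg a b else 0 := by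
    unfold hA; simp_rw [Finset.sum_filter]
  calc Sfull A
      = ∑ a ∈ A, ∑ b ∈ A, ((if a < b then xg a b else 0) + (if b < a then xg a b else 0)) := by
        unfold Sfull; simp_rw [← xg_split]
    _ = (∑ a ∈ A, ∑ b ∈ A, if a < b then xg a b else 0)
        + (∑ a ∈ A, ∑ b ∈ A, if b < a then xg a b else 0) := by
        simp_rw [Finset.sum_add_distrib]
    _ = hA A + hA A := by
        rw [← h1]
        congr 1
        rw [Finset.sum_comm]
        rw [h1]
        exact Finset.sum_congr rfl fun a _ => Finset.sum_congr rfl fun b _ => by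
          rw [xg_comm]

lemma Sfull_mul_Sfull (B : Finset (Fin n)) : Sfull B * Sfull B = 0 := by
  have key : ∑ a ∈ B, ∑ b ∈ B, ∑ c ∈ B, ∑ d ∈ B,
      (xg a b * xg c d + xg a c * xg b d + xg a d * xg b c) = 0 :=
    Finset.sum_eq_zero fun a _ => Finset.sum_eq_zero fun b _ =>
      Finset.sum_eq_zero fun c _ => Finset.sum_eq_zero fun d _ => ptolemy a b c d
  have f1 : ∑ a ∈ B, ∑ b ∈ B, ∑ c ∈ B, ∑ d ∈ B, xg a b * xg c d = Sfull B * Sfull B := by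
    unfold Sfull; simp_rw [Finset.sum_mul, Finset.mul_sum]
  have f2 : ∑ a ∈ B, ∑ b ∈ B, ∑ c ∈ B, ∑ d ∈ B, xg a c * xg b d = Sfull B * Sfull B := by
    rw [← f1]
    refine Finset.sum_congr rfl fun a _ => ?_
    exact Finset.sum_comm
  have f3 : ∑ a ∈ B, ∑ b ∈ B, ∑ c ∈ B, ∑ d ∈ B, xg a d * xg b c = Sfull B * Sfull B := by
    rw [← f1]
    refine Finset.sum_congr rfl fun a _ => ?_
    calc ∑ b ∈ B, ∑ c ∈ B, ∑ d ∈ B, xg a d * xg b c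
        = ∑ b ∈ B, ∑ d ∈ B, ∑ c ∈ B, xg a d * xg b c :=
          Finset.sum_congr rfl fun b _ => Finset.sum_comm
      _ = ∑ d ∈ B, ∑ b ∈ B, ∑ c ∈ B, xg a d * xg b c := Finset.sum_comm
      _ = ∑ b ∈ B, ∑ c ∈ B, ∑ d ∈ B, xg a b * xg c d := rfl
  have key' : (∑ a ∈ B, ∑ b ∈ B, ∑ c ∈ B, ∑ d ∈ B, xg a b * xg c d)
      + (∑ a ∈ B, ∑ b ∈ B, ∑ c ∈ B, ∑ d ∈ B, xg a c * xg b d)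
      + (∑ a ∈ B, ∑ b ∈ B, ∑ c ∈ B, ∑ d ∈ B, xg a d * xg b c) = 0 := by
    simpa [Finset.sum_add_distrib] using key
  rw [f1, f2, f3] at key'
  have h3 := key' 
  have := congrArg (fun z => (1/3 : ℚ) • z) h3
  simpa [smul_add, smul_zero, ← two_smul ℚ, smul_smul] using
    (by
      have : (3 : ℚ) • (Sfull B * Sfull B) = 0 := by
        rw [show (3:ℚ) = 1 + 1 + 1 by norm_num, add_smul, add_smul, one_smul]; exact h3
      calc Sfull B * Sfull B = (1/3 : ℚ) • ((3 : ℚ) • (Sfull B * Sfull B)) := by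
            rw [smul_smul]; norm_num
        _ = 0 := by rw [this, smul_zero] : Sfull B * Sfull B = 0)

lemma Sfull_mul_e (B : Finset (Fin n)) (z : Fin n) :
    Sfull B * (∑ c ∈ B, xg z c) = 0 := by
  set e : Mring n := ∑ c ∈ B, xg z c with he
  have key : ∑ a ∈ B, ∑ b ∈ B, ∑ c ∈ B,
      (xg a b * xg z c + xg a z * xg b c + xg a c * xg b z) = 0 :=
    Finset.sum_eq_zero fun a _ => Finset.sum_eq_zero fun b _ =>
      Finset.sum_eq_zero fun c _ => ptolemy a b z c
  have f1 : ∑ a ∈ B, ∑ b ∈ B, ∑ c ∈ B, xg a b * xg z c = Sfull B * e := by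
    unfold Sfull; rw [he]; simp_rw [Finset.sum_mul, Finset.mul_sum]
  have f2 : ∑ a ∈ B, ∑ b ∈ B, ∑ c ∈ B, xg a z * xg b c = Sfull B * e := by
    have : ∑ a ∈ B, ∑ b ∈ B, ∑ c ∈ B, xg a z * xg b c
        = (∑ a ∈ B, xg a z) * Sfull B := by
      unfold Sfull; simp_rw [Finset.sum_mul, Finset.mul_sum]
    rw [this, mul_comm]
    congr 1
    exact Finset.sum_congr rfl fun c _ => (xg_comm z c).symm
  have f3 : ∑ a ∈ B, ∑ b ∈ B, ∑ c ∈ B, xg a c * xg b z = Sfull B * e := by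
    have step : ∑ a ∈ B, ∑ b ∈ B, ∑ c ∈ B, xg a c * xg b z
        = ∑ a ∈ B, ∑ c ∈ B, xg a c * ∑ b ∈ B, xg b z := by
      refine Finset.sum_congr rfl fun a _ => ?_
      rw [Finset.sum_comm]
      exact Finset.sum_congr rfl fun c _ => by rw [Finset.mul_sum]
    rw [step]
    have : (∑ a ∈ B, ∑ c ∈ B, xg a c * ∑ b ∈ B, xg b z) = Sfull B * (∑ b ∈ B, xg b z) := by
      unfold Sfull; simp_rw [Finset.sum_mul]
    rw [this]
    congr 1
    exact Finset.sum_congr rfl fun c _ => (xg_comm c z)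
  have key' : (∑ a ∈ B, ∑ b ∈ B, ∑ c ∈ B, xg a b * xg z c)
      + (∑ a ∈ B, ∑ b ∈ B, ∑ c ∈ B, xg a z * xg b c)
      + (∑ a ∈ B, ∑ b ∈ B, ∑ c ∈ B, xg a c * xg b z) = 0 := by
    simpa [Finset.sum_add_distrib] using key
  rw [f1, f2, f3] at key'
  have h3 := key' 
  have h3' : (3 : ℚ) • (Sfull B * e) = 0 := by
    rw [show (3:ℚ) = 1 + 1 + 1 by norm_num, add_smul, add_smul, one_smul]; exact h3
  calc Sfull B * e = (1/3 : ℚ) • ((3 : ℚ) • (Sfull B * e)) := by rw [smul_smul]; norm_num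
    _ = 0 := by rw [h3', smul_zero]

/-- In `M_n`, if `B ⊆ [n]` does not contain the element `1`, then `h(B)·h(B ∪ {1}) = 0`. -/
theorem hA_mul_hA_insert_one (n : ℕ) [NeZero n] (B : Finset (Fin n))
    (hB : (0 : Fin n) ∉ B) :
    hA B * hA (insert (0 : Fin n) B) = 0 := by
  have hins : Sfull (insert (0 : Fin n) B)
      = Sfull B + (∑ c ∈ B, xg (0 : Fin n) c) + (∑ c ∈ B, xg (0 : Fin n) c) := by
    unfold Sfull
    rw [Finset.sum_insert hB, Finset.sum_insert hB,
      Finset.sum_congr rfl (fun a (_ : a ∈ B) => Finset.sum_insert hB), xg_self,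
      Finset.sum_add_distrib,
      show ∑ a ∈ B, xg a (0 : Fin n) = ∑ c ∈ B, xg (0 : Fin n) c from
        Finset.sum_congr rfl fun a _ => (xg_comm a 0)]
    ring
  have hzero : Sfull B * Sfull (insert (0 : Fin n) B) = 0 := by
    rw [hins, mul_add, mul_add, Sfull_mul_Sfull, Sfull_mul_e]
    ring
  have h4 : (hA B + hA B) * (hA (insert (0 : Fin n) B) + hA (insert (0 : Fin n) B)) = 0 := by
    rw [← Sfull_eq, ← Sfull_eq]; exact hzero
  have h4' : (4 : ℚ) • (hA B * hA (insert (0 : Fin n) B)) = 0 := by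
    rw [show (4:ℚ) = 1 + 1 + 1 + 1 by norm_num, add_smul, add_smul, add_smul, one_smul]
    calc hA B * hA (insert (0 : Fin n) B) + hA B * hA (insert (0 : Fin n) B)
          + hA B * hA (insert (0 : Fin n) B) + hA B * hA (insert (0 : Fin n) B)
        = (hA B + hA B) * (hA (insert (0 : Fin n) B) + hA (insert (0 : Fin n) B)) := by ring
      _ = 0 := h4
  calc hA B * hA (insert (0 : Fin n) B)
      = (1/4 : ℚ) • ((4 : ℚ) • (hA B * hA (insert (0 : Fin n) B))) := by
        rw [smul_smul]; norm_num
    _ = 0 := by rw [h4', smul_zero]
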